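/- arXiv:1306.6453 — 4 statements merged into one kernel-verified Lean document; each statement's English description precedes it below -/
import Mathlib

section
/- There exist constants C̄, R̄, H̄, c̄, ā₀, b̄₀ ∈ (0,∞) (depending on g and λ) such that the quadratic function ρ̄(q,p,u) := C̄(q² + p² + u²) + R̄·pq + gH̄·pu satisfies, for all (q,p,u) ∈ ℝ³: (i) ρ̄(q,p,u) ≥ c̄(q² + p² + u²), and (ii) (Lρ̄)(q,p,u) ≤ −ā₀·ρ̄(q,p,u) + b̄₀. -/
noncomputable section

/-- Configuration space `ℝ³` with coordinates `(q, p, u) = (x 0, x 1, x 2)`. -/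
abbrev Vec3 := Fin 3 → ℝ

/-- Partial derivative in the `i`-th coordinate direction. -/
noncomputable def pd3 (i : Fin 3) (f : Vec3 → ℝ) (x : Vec3) : ℝ :=
  fderiv ℝ f x (Pi.single i 1)

/-- The first order operator `B = p∂_q − q∂_p + g(u∂_p − p∂_u)`. -/
noncomputable def Bop (g : ℝ) (f : Vec3 → ℝ) (x : Vec3) : ℝ :=
  x 1 * pd3 0 f x - x 0 * pd3 1 f x + g * (x 2 * pd3 1 f x - x 1 * pd3 2 f x)

/-- The Markov generator `L = ∂_u² + B − λu∂_u`. -/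
noncomputable def Lop (g lam : ℝ) (f : Vec3 → ℝ) (x : Vec3) : ℝ :=
  pd3 2 (pd3 2 f) x + Bop g f x - lam * (x 2 * pd3 2 f x)

/-- The quadratic function `ρ̄(q,p,u) = C̄(q²+p²+u²) + R̄·pq + gH̄·pu`. -/
noncomputable def rhoBar (g C R H : ℝ) (w : Vec3) : ℝ :=
  C * (w 0 ^ 2 + w 1 ^ 2 + w 2 ^ 2) + R * (w 1 * w 0) + g * H * (w 1 * w 2)

/-! Take `R̄ = 1` and `H̄ = 2 / g²`. The cross terms make `ρ̄` differ from `C̄ |w|²` by at most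
`D |w|²` with `D = (1 + 2/|g|)/2`, so `ρ̄` is comparable to `|w|²` once `C̄ > D`. The choice
`g² H̄ = 2 > R̄` makes `Lρ̄ = 2C̄ - q² - p² + (2 - 2C̄λ) u²` plus cross terms in `qu` and `pu`;
Young's inequality trades these for `q²/2 + p²/2` and a multiple of `u²` that the damping
`-2C̄λ u²` dominates for `C̄` large. Hence `Lρ̄ ≤ 2C̄ - |w|²/2 ≤ 2C̄ - ρ̄ / (2(C̄ + D))`. -/

open ContinuousLinearMap

lemma hasFDerivAt_rhoBar (g C R H : ℝ) (w : Vec3) :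
    HasFDerivAt (rhoBar g C R H)
      ((2 * C * w 0 + R * w 1) • (proj (0 : Fin 3) : Vec3 →L[ℝ] ℝ)
        + (2 * C * w 1 + R * w 0 + g * H * w 2) • (proj (1 : Fin 3) : Vec3 →L[ℝ] ℝ)
        + (2 * C * w 2 + g * H * w 1) • (proj (2 : Fin 3) : Vec3 →L[ℝ] ℝ)) w := by
  have h : ∀ i : Fin 3, HasFDerivAt (fun v : Vec3 => v i) (proj i) w :=
    fun i => (proj i : Vec3 →L[ℝ] ℝ).hasFDerivAt
  have := (((((h 0).mul (h 0)).add ((h 1).mul (h 1))).add ((h 2).mul (h 2))).const_mul C).add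
    ((((h 1).mul (h 0)).const_mul R).add (((h 1).mul (h 2)).const_mul (g * H)))
  refine (this.congr_fderiv ?_).congr_of_eventuallyEq (.of_forall fun v => ?_)
  · ext v
    simp only [smul_add, add_apply, smul_apply, proj_apply, smul_eq_mul]
    ring
  · simp only [rhoBar, Pi.add_apply, Pi.mul_apply]
    ring

lemma pd3_zero_rhoBar (g C R H : ℝ) (w : Vec3) :
    pd3 0 (rhoBar g C R H) w = 2 * C * w 0 + R * w 1 := by
  simp [pd3, (hasFDerivAt_rhoBar g C R H w).fderiv]

lemma pd3_one_rhoBar (g C R H : ℝ) (w : Vec3) :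
    pd3 1 (rhoBar g C R H) w = 2 * C * w 1 + R * w 0 + g * H * w 2 := by
  simp [pd3, (hasFDerivAt_rhoBar g C R H w).fderiv]

lemma pd3_two_rhoBar (g C R H : ℝ) (w : Vec3) :
    pd3 2 (rhoBar g C R H) w = 2 * C * w 2 + g * H * w 1 := by
  simp [pd3, (hasFDerivAt_rhoBar g C R H w).fderiv]

lemma pd3_two_pd3_two_rhoBar (g C R H : ℝ) (w : Vec3) :
    pd3 2 (pd3 2 (rhoBar g C R H)) w = 2 * C := by
  have h : HasFDerivAt (pd3 2 (rhoBar g C R H))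
      ((2 * C) • (proj (2 : Fin 3) : Vec3 →L[ℝ] ℝ)
        + (g * H) • (proj (1 : Fin 3) : Vec3 →L[ℝ] ℝ)) w := by
    rw [funext (pd3_two_rhoBar g C R H)]
    exact ((hasFDerivAt_apply 2 w).const_mul _).add ((hasFDerivAt_apply 1 w).const_mul _)
  simp [pd3, h.fderiv]

lemma Lop_rhoBar (g lam C R H : ℝ) (w : Vec3) :
    Lop g lam (rhoBar g C R H) w =
      2 * C - R * w 0 ^ 2 + (R - g ^ 2 * H) * w 1 ^ 2 + (g ^ 2 * H - 2 * C * lam) * w 2 ^ 2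
        + g * (R - H) * (w 0 * w 2) - g * H * lam * (w 1 * w 2) := by
  rw [Lop, Bop, pd3_two_pd3_two_rhoBar, pd3_zero_rhoBar, pd3_one_rhoBar, pd3_two_rhoBar]
  ring

lemma abs_mul_le_add_sq_div_two (x y : ℝ) : |x * y| ≤ (x ^ 2 + y ^ 2) / 2 := by
  rw [abs_mul]
  nlinarith [sq_nonneg (|x| - |y|), sq_abs x, sq_abs y]

lemma abs_rhoBar_sub_le (g C R H : ℝ) (w : Vec3) :
    |rhoBar g C R H w - C * (w 0 ^ 2 + w 1 ^ 2 + w 2 ^ 2)|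
      ≤ (|R| + |g * H|) / 2 * (w 0 ^ 2 + w 1 ^ 2 + w 2 ^ 2) := by
  have hR := mul_le_mul_of_nonneg_left (abs_mul_le_add_sq_div_two (w 1) (w 0)) (abs_nonneg R)
  have hH := mul_le_mul_of_nonneg_left (abs_mul_le_add_sq_div_two (w 1) (w 2))
    (abs_nonneg (g * H))
  calc |rhoBar g C R H w - C * (w 0 ^ 2 + w 1 ^ 2 + w 2 ^ 2)|
      = |R * (w 1 * w 0) + g * H * (w 1 * w 2)| := by rw [rhoBar, add_assoc, add_sub_cancel_left]
    _ ≤ |R| * |w 1 * w 0| + |g * H| * |w 1 * w 2| := by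
      rw [← abs_mul, ← abs_mul]; exact abs_add_le _ _
    _ ≤ _ := by nlinarith [abs_nonneg R, abs_nonneg (g * H)]

lemma Lop_rhoBar_le {g lam C : ℝ} (hg : g ≠ 0)
    (hC : 5 / 2 + (g - 2 / g) ^ 2 / 2 + 2 * lam ^ 2 / g ^ 2 ≤ 2 * C * lam) (w : Vec3) :
    Lop g lam (rhoBar g C 1 (2 / g ^ 2)) w ≤ 2 * C - 1 / 2 * (w 0 ^ 2 + w 1 ^ 2 + w 2 ^ 2) := by
  have hgH : g * (2 / g ^ 2) = 2 / g := by field_simp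
  have hg2H : g ^ 2 * (2 / g ^ 2) = 2 := by field_simp
  have hgR : g * (1 - 2 / g ^ 2) = g - 2 / g := by field_simp
  have hlam : 2 * lam ^ 2 / g ^ 2 = (2 / g * lam) ^ 2 / 2 := by ring
  rw [Lop_rhoBar, hgH, hg2H, hgR]
  rw [hlam] at hC
  nlinarith [sq_nonneg (w 0 - (g - 2 / g) * w 2), sq_nonneg (w 1 + 2 / g * lam * w 2),
    mul_le_mul_of_nonneg_right hC (sq_nonneg (w 2))]

lemma le_neg_mul_add_of_le_sub {Lρ ρ S M κ b : ℝ} (hM : 0 < M) (hκ : 0 ≤ κ)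
    (hρ : ρ ≤ M * S) (hL : Lρ ≤ b - κ * S) : Lρ ≤ -(κ / M) * ρ + b := by
  have : κ / M * ρ ≤ κ * S := by
    calc κ / M * ρ ≤ κ / M * (M * S) := by gcongr
      _ = κ * S := by field_simp
  linarith

/-- There exist positive constants `C̄, R̄, H̄, c̄, ā₀, b̄₀` (depending on `g, λ`) such
that `ρ̄ ≥ c̄(q²+p²+u²)` and `Lρ̄ ≤ −ā₀ρ̄ + b̄₀` on `ℝ³`. -/
theorem langevin_lyapunov_function (g lam : ℝ) (hg : g ≠ 0) (hlam : 0 < lam) :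
    ∃ C R H c a0 b0 : ℝ, 0 < C ∧ 0 < R ∧ 0 < H ∧ 0 < c ∧ 0 < a0 ∧ 0 < b0 ∧
      (∀ w : Vec3, rhoBar g C R H w ≥ c * (w 0 ^ 2 + w 1 ^ 2 + w 2 ^ 2)) ∧
      (∀ w : Vec3, Lop g lam (rhoBar g C R H) w ≤ -a0 * rhoBar g C R H w + b0) := by
  set K := 5 / 2 + (g - 2 / g) ^ 2 / 2 + 2 * lam ^ 2 / g ^ 2
  set D := (|(1 : ℝ)| + |g * (2 / g ^ 2)|) / 2
  set C := K / (2 * lam) + D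
  have hC : 0 < C := by positivity
  have hCD : 0 < C - D := by simp only [C, add_sub_cancel_right]; positivity
  have hKC : K ≤ 2 * C * lam := by
    have hCK : 2 * C * lam = K + 2 * D * lam := by simp only [C]; field_simp
    rw [hCK]
    linarith [show 0 ≤ 2 * D * lam by positivity]
  have hρ : ∀ w : Vec3, |rhoBar g C 1 (2 / g ^ 2) w - C * (w 0 ^ 2 + w 1 ^ 2 + w 2 ^ 2)|
      ≤ D * (w 0 ^ 2 + w 1 ^ 2 + w 2 ^ 2) := abs_rhoBar_sub_le g C 1 (2 / g ^ 2)
  refine ⟨C, 1, 2 / g ^ 2, C - D, 1 / 2 / (C + D), 2 * C, hC, one_pos, by positivity, hCD,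
    by positivity, by positivity, fun w => ?_, fun w => ?_⟩
  · linarith [(abs_le.mp (hρ w)).1]
  · exact le_neg_mul_add_of_le_sub (by positivity) (by norm_num)
      (by linarith [(abs_le.mp (hρ w)).2]) (Lop_rhoBar_le hg hKC w)
end
end

section
/- Under the stated commutation hypotheses, for every n ∈ ℕ and every multi-index 𝐤 = (k₁,…,k_n) ∈ {0,…,N+1}ⁿ, writing 𝒴_𝐤 := Y_{k₁}⋯Y_{k_n} and κ_𝐤 := Σ_{j=1}^n κ_{k_j}, the following operator identity holds on smooth functions: [𝒴_𝐤, L] = −λκ_𝐤 𝒴_𝐤 − Σ_{j : k_j ≥ 1} Y_{k₁}⋯Y_{k_{j−1}} Y_{k_j+1} Y_{k_{j+1}}⋯Y_{k_n} + 2 Σ_{j : k_j = 0} Y_{k₁}⋯Y_{k_{j−1}} Y₁Y₂ Y_{k_{j+1}}⋯Y_{k_n} (with the convention Y_{N+2} = 0). -/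
noncomputable section

/-- Operators on functions on `ℝ^m`. -/
abbrev OpM (m : ℕ) := ((Fin m → ℝ) → ℝ) → (Fin m → ℝ) → ℝ

/-- Partial derivative in the `i`-th coordinate direction. -/
noncomputable def pdM {m : ℕ} (i : Fin m) (f : (Fin m → ℝ) → ℝ) (x : Fin m → ℝ) : ℝ :=
  fderiv ℝ f x (Pi.single i 1)

/-- The first order operator `f ↦ ⟨V(x), ∇f(x)⟩` associated to a vector field `V`. -/
noncomputable def vecOp {m : ℕ} (V : (Fin m → ℝ) → Fin m → ℝ) : OpM m :=
  fun f x => ∑ j, V x j * pdM j f x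

/-- Commutator `[X,Y] = XY − YX` of operators. -/
def commOp {m : ℕ} (X Y : OpM m) : OpM m := fun f x => X (Y f) x - Y (X f) x

/-- The generator `L = Y₁² + Y₀ − λD` built from vector fields `V 0, V 1` and `W`. -/
noncomputable def Lgen {m : ℕ} (V : ℕ → (Fin m → ℝ) → Fin m → ℝ)
    (W : (Fin m → ℝ) → Fin m → ℝ) (lam : ℝ) : OpM m :=
  fun f x => vecOp (V 1) (vecOp (V 1) f) x + vecOp (V 0) f x - lam * vecOp W f x

/-- The composition `𝒴_𝐤 = Y_{k₁}⋯Y_{k_n}` indexed by a list of indices. -/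
noncomputable def Ycomp {m : ℕ} (V : ℕ → (Fin m → ℝ) → Fin m → ℝ) : List ℕ → OpM m
  | [] => fun f => f
  | i :: t => fun f => vecOp (V i) (Ycomp V t f)

/-! `[·, L]` is a derivation in its first slot, so
`[Y_{k₁}⋯Y_{k_n}, L] = Y_{k₁}[Y_{k₂}⋯Y_{k_n}, L] + [Y_{k₁}, L] Y_{k₂}⋯Y_{k_n}` and induction on `n`
reduces everything to one letter. There `[Y_a, D] = κ_a Y_a`, `[Y_a, Y₀] = -Y_{a+1}` for `a ≥ 1`,
and `[Y_a, Y₁²] = [Y_a, Y₁] Y₁ + Y₁ [Y_a, Y₁]` vanishes for `a ≥ 1` and equals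
`Y₂Y₁ + Y₁Y₂ = 2 Y₁Y₂` for `a = 0`. -/

open scoped ContDiff

@[fun_prop]
theorem DifferentiableAt.ite_const {E F : Type*} [NormedAddCommGroup E] [NormedSpace ℝ E]
    [NormedAddCommGroup F] [NormedSpace ℝ F] {f g : E → F} {x : E} (p : Prop) [Decidable p]
    (hf : DifferentiableAt ℝ f x) (hg : DifferentiableAt ℝ g x) :
    DifferentiableAt ℝ (fun y => if p then f y else g y) x := by
  split_ifs <;> assumption

section VectorFieldOperator

variable {m : ℕ}

theorem vecOp_apply (V : (Fin m → ℝ) → Fin m → ℝ) (f : (Fin m → ℝ) → ℝ) (x : Fin m → ℝ) :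
    vecOp V f x = fderiv ℝ f x (V x) := by
  conv_rhs => rw [← Finset.univ_sum_single (V x)]
  simp only [vecOp, pdM, map_sum]
  refine Finset.sum_congr rfl fun j _ => ?_
  rw [← smul_eq_mul, ← map_smul, ← Pi.single_smul, smul_eq_mul, mul_one]

theorem vecOp_zero_field : vecOp (0 : (Fin m → ℝ) → Fin m → ℝ) = fun _ _ => 0 := by
  funext f x
  simp [vecOp]

theorem vecOp_const (V : (Fin m → ℝ) → Fin m → ℝ) (c : ℝ) (x : Fin m → ℝ) :
    vecOp V (fun _ => c) x = 0 := by
  simp [vecOp_apply]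

section Linearity

variable {V : (Fin m → ℝ) → Fin m → ℝ} {f g : (Fin m → ℝ) → ℝ} {x : Fin m → ℝ}

theorem vecOp_add (hf : DifferentiableAt ℝ f x) (hg : DifferentiableAt ℝ g x) :
    vecOp V (fun y => f y + g y) x = vecOp V f x + vecOp V g x := by
  simp only [vecOp_apply, fderiv_fun_add hf hg, add_apply]

theorem vecOp_sub (hf : DifferentiableAt ℝ f x) (hg : DifferentiableAt ℝ g x) :
    vecOp V (fun y => f y - g y) x = vecOp V f x - vecOp V g x := by
  simp only [vecOp_apply, fderiv_fun_sub hf hg, sub_apply]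

theorem vecOp_const_mul (hf : DifferentiableAt ℝ f x) (c : ℝ) :
    vecOp V (fun y => c * f y) x = c * vecOp V f x := by
  simp only [vecOp_apply, fderiv_const_mul hf c, smul_apply, smul_eq_mul]

theorem vecOp_sum {ι : Type*} (s : Finset ι) {F : ι → (Fin m → ℝ) → ℝ}
    (hF : ∀ i ∈ s, DifferentiableAt ℝ (F i) x) :
    vecOp V (fun y => ∑ i ∈ s, F i y) x = ∑ i ∈ s, vecOp V (F i) x := by
  simp only [vecOp_apply, fderiv_fun_sum hF, sum_apply]

theorem vecOp_ite_zero (p : Prop) [Decidable p] :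
    vecOp V (fun y => if p then f y else 0) x = if p then vecOp V f x else 0 := by
  split_ifs
  · rfl
  · exact vecOp_const V 0 x

end Linearity

theorem ContDiff.differentiableAt_of_infty {f : (Fin m → ℝ) → ℝ} (hf : ContDiff ℝ ∞ f)
    (x : Fin m → ℝ) : DifferentiableAt ℝ f x :=
  (hf.differentiable (by simp)).differentiableAt

theorem ContDiff.vecOp {V : (Fin m → ℝ) → Fin m → ℝ} {f : (Fin m → ℝ) → ℝ}
    (hV : ContDiff ℝ ∞ V) (hf : ContDiff ℝ ∞ f) : ContDiff ℝ ∞ (vecOp V f) := by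
  simp only [funext (vecOp_apply V f)]
  exact (hf.fderiv_right (m := ∞) (by simp)).clm_apply hV

theorem ContDiff.Ycomp {V : ℕ → (Fin m → ℝ) → Fin m → ℝ} (hV : ∀ i, ContDiff ℝ ∞ (V i))
    {f : (Fin m → ℝ) → ℝ} (hf : ContDiff ℝ ∞ f) : ∀ l : List ℕ, ContDiff ℝ ∞ (Ycomp V l f)
  | [] => hf
  | i :: l => (hV i).vecOp (ContDiff.Ycomp hV hf l)

theorem Ycomp_cons (V : ℕ → (Fin m → ℝ) → Fin m → ℝ) (a : ℕ) (l : List ℕ) :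
    Ycomp V (a :: l) = fun g => vecOp (V a) (Ycomp V l g) :=
  rfl

theorem contDiff_Lgen {V : ℕ → (Fin m → ℝ) → Fin m → ℝ} (hV₀ : ContDiff ℝ ∞ (V 0))
    (hV₁ : ContDiff ℝ ∞ (V 1)) {W : (Fin m → ℝ) → Fin m → ℝ} (hW : ContDiff ℝ ∞ W) (lam : ℝ)
    {f : (Fin m → ℝ) → ℝ} (hf : ContDiff ℝ ∞ f) : ContDiff ℝ ∞ (Lgen V W lam f) :=
  ((hV₁.vecOp (hV₁.vecOp hf)).add (hV₀.vecOp hf)).sub (contDiff_const.mul (hW.vecOp hf))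

end VectorFieldOperator

section Commutator

variable {m : ℕ}

theorem commOp_vecOp_zero_left (B : (Fin m → ℝ) → Fin m → ℝ) (f : (Fin m → ℝ) → ℝ)
    (x : Fin m → ℝ) : commOp (vecOp 0) (vecOp B) f x = 0 := by
  simp [commOp, vecOp_zero_field, vecOp_const]

theorem commOp_vecOp_zero_right (A : (Fin m → ℝ) → Fin m → ℝ) (f : (Fin m → ℝ) → ℝ)
    (x : Fin m → ℝ) : commOp (vecOp A) (vecOp 0) f x = 0 := by
  simp [commOp, vecOp_zero_field, vecOp_const]

theorem commOp_vecOp_comp_left (A : (Fin m → ℝ) → Fin m → ℝ) (P Q : OpM m)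
    {f : (Fin m → ℝ) → ℝ} {x : Fin m → ℝ} (hPQ : DifferentiableAt ℝ (P (Q f)) x)
    (hQP : DifferentiableAt ℝ (Q (P f)) x) :
    commOp (fun g => vecOp A (P g)) Q f x
      = vecOp A (commOp P Q f) x + commOp (vecOp A) Q (P f) x := by
  rw [show vecOp _ (commOp P Q f) x = _ from vecOp_sub hPQ hQP]
  simp only [commOp]
  ring

theorem commOp_vecOp_comp_right (P : OpM m) (B : (Fin m → ℝ) → Fin m → ℝ) (Q : OpM m)
    {f : (Fin m → ℝ) → ℝ} {x : Fin m → ℝ} (hPQ : DifferentiableAt ℝ (P (Q f)) x)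
    (hQP : DifferentiableAt ℝ (Q (P f)) x) :
    commOp P (fun g => vecOp B (Q g)) f x
      = commOp P (vecOp B) (Q f) x + vecOp B (commOp P Q f) x := by
  rw [show vecOp _ (commOp P Q f) x = _ from vecOp_sub hPQ hQP]
  simp only [commOp]
  ring

theorem commOp_vecOp_Lgen (A : (Fin m → ℝ) → Fin m → ℝ) {V : ℕ → (Fin m → ℝ) → Fin m → ℝ}
    {W : (Fin m → ℝ) → Fin m → ℝ} (hV₀ : ContDiff ℝ ∞ (V 0)) (hV₁ : ContDiff ℝ ∞ (V 1))
    (hW : ContDiff ℝ ∞ W) (lam : ℝ) {f : (Fin m → ℝ) → ℝ} (hf : ContDiff ℝ ∞ f)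
    (x : Fin m → ℝ) :
    commOp (vecOp A) (Lgen V W lam) f x =
      commOp (vecOp A) (fun g => vecOp (V 1) (vecOp (V 1) g)) f x
        + commOp (vecOp A) (vecOp (V 0)) f x - lam * commOp (vecOp A) (vecOp W) f x := by
  have h₁₁ := (hV₁.vecOp (hV₁.vecOp hf)).differentiableAt_of_infty x
  have h₀ := (hV₀.vecOp hf).differentiableAt_of_infty x
  have hD := (hW.vecOp hf).differentiableAt_of_infty x
  simp only [commOp]
  rw [show vecOp A (Lgen V W lam f) x = _ from vecOp_sub (h₁₁.add h₀) (hD.const_mul lam),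
    vecOp_add h₁₁ h₀, vecOp_const_mul hD]
  simp only [Lgen]
  ring

end Commutator

/-- The commutation relations with unbounded indices: since `Y_i = 0` for `i > N + 1`, the
relations of the statement then hold for every index. -/
structure FiliformRelations {m : ℕ} (κ : ℕ → ℝ) (V : ℕ → (Fin m → ℝ) → Fin m → ℝ)
    (W : (Fin m → ℝ) → Fin m → ℝ) : Prop where
  contDiff_field : ∀ i, ContDiff ℝ ∞ (V i)
  contDiff_dilation : ContDiff ℝ ∞ W
  commOp_zero : ∀ j, 1 ≤ j → ∀ f : (Fin m → ℝ) → ℝ, ContDiff ℝ ∞ f → ∀ x,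
    commOp (vecOp (V 0)) (vecOp (V j)) f x = vecOp (V (j + 1)) f x
  commOp_pos : ∀ i j, 1 ≤ i → 1 ≤ j → ∀ f : (Fin m → ℝ) → ℝ, ContDiff ℝ ∞ f → ∀ x,
    commOp (vecOp (V i)) (vecOp (V j)) f x = 0
  commOp_dilation : ∀ i, ∀ f : (Fin m → ℝ) → ℝ, ContDiff ℝ ∞ f → ∀ x,
    commOp (vecOp (V i)) (vecOp W) f x = κ i * vecOp (V i) f x

namespace FiliformRelations

variable {m : ℕ} {κ : ℕ → ℝ} {V : ℕ → (Fin m → ℝ) → Fin m → ℝ} {W : (Fin m → ℝ) → Fin m → ℝ}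

theorem of_vanishing (N : ℕ) (hVs : ∀ i, ContDiff ℝ ∞ (V i)) (hVz : ∀ i, N + 1 < i → V i = 0)
    (hWs : ContDiff ℝ ∞ W)
    (h1 : ∀ j, 1 ≤ j → j ≤ N → ∀ f : (Fin m → ℝ) → ℝ, ContDiff ℝ ∞ f →
      ∀ x, commOp (vecOp (V 0)) (vecOp (V j)) f x = vecOp (V (j + 1)) f x)
    (h2 : ∀ f : (Fin m → ℝ) → ℝ, ContDiff ℝ ∞ f →
      ∀ x, commOp (vecOp (V 0)) (vecOp (V (N + 1))) f x = 0)
    (h3 : ∀ i j, 1 ≤ i → i ≤ N + 1 → 1 ≤ j → j ≤ N + 1 →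
      ∀ f : (Fin m → ℝ) → ℝ, ContDiff ℝ ∞ f →
      ∀ x, commOp (vecOp (V i)) (vecOp (V j)) f x = 0)
    (h4 : ∀ i ≤ N + 1, ∀ f : (Fin m → ℝ) → ℝ, ContDiff ℝ ∞ f →
      ∀ x, commOp (vecOp (V i)) (vecOp W) f x = κ i * vecOp (V i) f x) :
    FiliformRelations κ V W where
  contDiff_field := hVs
  contDiff_dilation := hWs
  commOp_zero j hj f hf x := by
    rcases lt_trichotomy j (N + 1) with hlt | rfl | hgt
    · exact h1 j hj (by omega) f hf x
    · rw [h2 f hf x, hVz (N + 2) (by omega), vecOp_zero_field]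
    · rw [hVz j hgt, hVz (j + 1) (by omega), commOp_vecOp_zero_right, vecOp_zero_field]
  commOp_pos i j hi hj f hf x := by
    by_cases hiN : i ≤ N + 1
    · by_cases hjN : j ≤ N + 1
      · exact h3 i j hi hiN hj hjN f hf x
      · rw [hVz j (by omega), commOp_vecOp_zero_right]
    · rw [hVz i (by omega), commOp_vecOp_zero_left]
  commOp_dilation i f hf x := by
    by_cases hiN : i ≤ N + 1
    · exact h4 i hiN f hf x
    · rw [hVz i (by omega), commOp_vecOp_zero_left, vecOp_zero_field, mul_zero]

theorem commOp_vecOp_Lgen_eq (hR : FiliformRelations κ V W) (lam : ℝ) (a : ℕ)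
    {g : (Fin m → ℝ) → ℝ} (hg : ContDiff ℝ ∞ g) (x : Fin m → ℝ) :
    commOp (vecOp (V a)) (Lgen V W lam) g x
      = -(lam * κ a) * vecOp (V a) g x
        - (if 1 ≤ a then vecOp (V (a + 1)) g x else 0)
        + 2 * (if a = 0 then vecOp (V 1) (vecOp (V 2) g) x else 0) := by
  have hV := hR.contDiff_field
  have hY₁g := (hV 1).vecOp hg
  rw [commOp_vecOp_Lgen _ (hV 0) (hV 1) hR.contDiff_dilation lam hg,
    commOp_vecOp_comp_right _ _ _ (((hV a).vecOp hY₁g).differentiableAt_of_infty x)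
      (((hV 1).vecOp ((hV a).vecOp hg)).differentiableAt_of_infty x),
    hR.commOp_dilation a g hg x]
  obtain rfl | ha : a = 0 ∨ 1 ≤ a := by omega
  · -- `[Y₀, Y₁²] = Y₂Y₁ + Y₁Y₂ = 2 Y₁Y₂`
    have h01 : commOp (vecOp (V 0)) (vecOp (V 1)) g = vecOp (V 2) g :=
      funext (hR.commOp_zero 1 le_rfl g hg)
    have h21 := hR.commOp_pos 2 1 (by norm_num) le_rfl g hg x
    rw [h01, hR.commOp_zero 1 le_rfl _ hY₁g x]
    simp only [commOp] at h21 ⊢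
    simp only [Nat.reduceAdd, sub_self, add_zero, neg_mul, nonpos_iff_eq_zero, one_ne_zero,
      ↓reduceIte, sub_zero]
    linarith
  · have ha1 : commOp (vecOp (V a)) (vecOp (V 1)) g = fun _ => 0 :=
      funext (hR.commOp_pos a 1 ha le_rfl g hg)
    have h0a := hR.commOp_zero a ha g hg x
    rw [ha1, hR.commOp_pos a 1 ha le_rfl _ hY₁g x, vecOp_const, if_pos ha, if_neg (by omega)]
    simp only [commOp] at h0a ⊢
    linarith

theorem commOp_Ycomp_Lgen (hR : FiliformRelations κ V W) (lam : ℝ) {n : ℕ} (k : Fin n → ℕ)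
    {f : (Fin m → ℝ) → ℝ} (hf : ContDiff ℝ ∞ f) (x : Fin m → ℝ) :
    commOp (Ycomp V (List.ofFn k)) (Lgen V W lam) f x
      = -(lam * ∑ j, κ (k j)) * Ycomp V (List.ofFn k) f x
        - (∑ j : Fin n, if 1 ≤ k j then
            Ycomp V (List.ofFn (Function.update k j (k j + 1))) f x else 0)
        + 2 * ∑ j : Fin n, (if k j = 0 then
            Ycomp V ((List.ofFn k).take (j : ℕ) ++ [1, 2]
              ++ (List.ofFn k).drop ((j : ℕ) + 1)) f x else 0) := by
  induction n generalizing x with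
  | zero => simp [commOp, Ycomp]
  | succ n ih =>
    obtain ⟨a, t, rfl⟩ : ∃ a t, k = Fin.cons a t :=
      ⟨k 0, Fin.tail k, (Fin.cons_self_tail k).symm⟩
    have hV := hR.contDiff_field
    have hY (l : List ℕ) : ContDiff ℝ ∞ (Ycomp V l f) := ContDiff.Ycomp hV hf l
    -- for the `fun_prop` discharger below
    have hYd (l : List ℕ) (y) : DifferentiableAt ℝ (Ycomp V l f) y :=
      (hY l).differentiableAt_of_infty y
    have hL {g : (Fin m → ℝ) → ℝ} (hg : ContDiff ℝ ∞ g) : ContDiff ℝ ∞ (Lgen V W lam g) :=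
      contDiff_Lgen (hV 0) (hV 1) hR.contDiff_dilation lam hg
    rw [List.ofFn_cons, Ycomp_cons,
      commOp_vecOp_comp_left _ _ _ ((ContDiff.Ycomp hV (hL hf) _).differentiableAt_of_infty x)
        ((hL (hY _)).differentiableAt_of_infty x),
      funext (ih t), hR.commOp_vecOp_Lgen_eq lam a (hY _) x]
    simp (disch := intros; fun_prop) only
      [vecOp_add, vecOp_sub, vecOp_const_mul, vecOp_sum, vecOp_ite_zero]
    simp only [Fin.sum_univ_succ, Fin.cons_zero, Fin.cons_succ, Fin.update_cons_zero,
      ← Fin.cons_update, List.ofFn_cons, Fin.val_zero, Fin.val_succ, List.take_succ_cons,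
      List.drop_succ_cons, List.take_zero, List.drop_zero, List.nil_append, List.cons_append, Ycomp]
    ring

end FiliformRelations

theorem filiform_multiindex_commutator_general (m N : ℕ) (κ : ℕ → ℝ)
    (V : ℕ → (Fin m → ℝ) → Fin m → ℝ) (hVs : ∀ i, ContDiff ℝ (⊤ : ℕ∞) (V i))
    (hVz : ∀ i, N + 1 < i → V i = 0)
    (W : (Fin m → ℝ) → Fin m → ℝ) (hWs : ContDiff ℝ (⊤ : ℕ∞) W)
    (lam : ℝ)
    (h1 : ∀ j, 1 ≤ j → j ≤ N → ∀ f : (Fin m → ℝ) → ℝ, ContDiff ℝ (⊤ : ℕ∞) f →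
      ∀ x, commOp (vecOp (V 0)) (vecOp (V j)) f x = vecOp (V (j + 1)) f x)
    (h2 : ∀ f : (Fin m → ℝ) → ℝ, ContDiff ℝ (⊤ : ℕ∞) f →
      ∀ x, commOp (vecOp (V 0)) (vecOp (V (N + 1))) f x = 0)
    (h3 : ∀ i j, 1 ≤ i → i ≤ N + 1 → 1 ≤ j → j ≤ N + 1 →
      ∀ f : (Fin m → ℝ) → ℝ, ContDiff ℝ (⊤ : ℕ∞) f →
      ∀ x, commOp (vecOp (V i)) (vecOp (V j)) f x = 0)
    (h4 : ∀ i ≤ N + 1, ∀ f : (Fin m → ℝ) → ℝ, ContDiff ℝ (⊤ : ℕ∞) f →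
      ∀ x, commOp (vecOp (V i)) (vecOp W) f x = κ i * vecOp (V i) f x)
    (n : ℕ) (k : Fin n → ℕ) :
    ∀ f : (Fin m → ℝ) → ℝ, ContDiff ℝ (⊤ : ℕ∞) f → ∀ x,
      commOp (Ycomp V (List.ofFn k)) (Lgen V W lam) f x
        = -(lam * ∑ j, κ (k j)) * Ycomp V (List.ofFn k) f x
          - (∑ j : Fin n, if 1 ≤ k j then
              Ycomp V (List.ofFn (Function.update k j (k j + 1))) f x else 0)
          + 2 * ∑ j : Fin n, (if k j = 0 then
              Ycomp V ((List.ofFn k).take (j : ℕ) ++ [1, 2]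
                ++ (List.ofFn k).drop ((j : ℕ) + 1)) f x else 0) := fun _ hf x =>
  (FiliformRelations.of_vanishing N hVs hVz hWs h1 h2 h3 h4).commOp_Ycomp_Lgen lam k hf x

/-- Under the filiform commutation relations, for any multi-index `𝐤 ∈ {0,…,N+1}ⁿ`,
`[𝒴_𝐤, L] = −λκ_𝐤𝒴_𝐤 − Σ_{j : k_j ≥ 1} Y_{k₁}⋯Y_{k_j+1}⋯Y_{k_n}
 + 2Σ_{j : k_j = 0} Y_{k₁}⋯Y_{k_{j-1}}Y₁Y₂Y_{k_{j+1}}⋯Y_{k_n}` (with `Y_{N+2} = 0`). -/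
theorem filiform_multiindex_commutator (m N : ℕ) (κ : ℕ → ℝ)
    (hκ : ∀ i ≤ N + 1, 0 < κ i)
    (V : ℕ → (Fin m → ℝ) → Fin m → ℝ) (hVs : ∀ i, ContDiff ℝ (⊤ : ℕ∞) (V i))
    (hVz : ∀ i, N + 1 < i → V i = 0)
    (W : (Fin m → ℝ) → Fin m → ℝ) (hWs : ContDiff ℝ (⊤ : ℕ∞) W)
    (lam : ℝ) (hlam : 0 < lam)
    (h1 : ∀ j, 1 ≤ j → j ≤ N → ∀ f : (Fin m → ℝ) → ℝ, ContDiff ℝ (⊤ : ℕ∞) f →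
      ∀ x, commOp (vecOp (V 0)) (vecOp (V j)) f x = vecOp (V (j + 1)) f x)
    (h2 : ∀ f : (Fin m → ℝ) → ℝ, ContDiff ℝ (⊤ : ℕ∞) f →
      ∀ x, commOp (vecOp (V 0)) (vecOp (V (N + 1))) f x = 0)
    (h3 : ∀ i j, 1 ≤ i → i ≤ N + 1 → 1 ≤ j → j ≤ N + 1 →
      ∀ f : (Fin m → ℝ) → ℝ, ContDiff ℝ (⊤ : ℕ∞) f →
      ∀ x, commOp (vecOp (V i)) (vecOp (V j)) f x = 0)
    (h4 : ∀ i ≤ N + 1, ∀ f : (Fin m → ℝ) → ℝ, ContDiff ℝ (⊤ : ℕ∞) f →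
      ∀ x, commOp (vecOp (V i)) (vecOp W) f x = κ i * vecOp (V i) f x)
    (n : ℕ) (k : Fin n → ℕ) (hk : ∀ j, k j ≤ N + 1) :
    ∀ f : (Fin m → ℝ) → ℝ, ContDiff ℝ (⊤ : ℕ∞) f → ∀ x,
      commOp (Ycomp V (List.ofFn k)) (Lgen V W lam) f x
        = -(lam * ∑ j, κ (k j)) * Ycomp V (List.ofFn k) f x
          - (∑ j : Fin n, if 1 ≤ k j then
              Ycomp V (List.ofFn (Function.update k j (k j + 1))) f x else 0)
          + 2 * ∑ j : Fin n, (if k j = 0 then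
              Ycomp V ((List.ofFn k).take (j : ℕ) ++ [1, 2]
                ++ (List.ofFn k).drop ((j : ℕ) + 1)) f x else 0) :=
  filiform_multiindex_commutator_general m N κ V hVs hVz W hWs lam h1 h2 h3 h4 n k
end
end

section
/- Let λ ≥ 0, ε ∈ ℝ and let f : (0,∞) × ℝ → ℝ be smooth with ∂_t f(t,·) = L f(t,·). Then pointwise on (0,∞) × ℝ: ∂_t((∂_x f)²) − L((∂_x f)²) = −2(x∂_x²f − ∂_x f)² − 2(λ−1)(∂_x f)². Consequently, for λ > 1, ∂_t(e^{2(λ−1)t}(∂_x f)²) − L(e^{2(λ−1)t}(∂_x f)²) ≤ 0 (the pointwise form of the gradient bound |∂_x f_t|² ≤ e^{−2(λ−1)t}P_t|∂_x f₀|²). -/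
/-!
Since `∂ₜ f = L f`, the equality of mixed partials gives `∂ₜ ∂ₓ f = ∂ₓ (L f)`, so
`∂ₜ (∂ₓ f)² − L (∂ₓ f)² = 2 f' (L f)' − L (f'²)` with `f = f t`. Expanding this Γ₂-type expression,
the third-derivative terms cancel and what is left is `−2 (x f'' − f')² − 2 (λ − 1) f'²`.
The weight `e^{2(λ−1)t}` contributes exactly `2 (λ − 1) f'²` to the time derivative, leaving
`−2 e^{2(λ−1)t} (x f'' − f')² ≤ 0`.
-/

noncomputable section

/-- The B-S generator `(Lg)(x) = x²g''(x) + εg'(x) − λxg'(x)`. -/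
noncomputable def BSgen (lam eps : ℝ) (g : ℝ → ℝ) (x : ℝ) : ℝ :=
  x ^ 2 * deriv (deriv g) x + eps * deriv g x - lam * x * deriv g x

open Function Filter Set Topology
open scoped ContDiff

section Slices

variable {E : Type*} [NormedAddCommGroup E] [NormedSpace ℝ E] {G : ℝ × ℝ → E}
  {G' : ℝ × ℝ →L[ℝ] E} {s y : ℝ}

theorem HasFDerivAt.hasDerivAt_slice_fst (hG : HasFDerivAt G G' (s, y)) :
    HasDerivAt (fun r => G (r, y)) (G' (1, 0)) s :=
  hG.comp_hasDerivAt s ((hasDerivAt_id s).prodMk (hasDerivAt_const s y))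

theorem HasFDerivAt.hasDerivAt_slice_snd (hG : HasFDerivAt G G' (s, y)) :
    HasDerivAt (fun r => G (s, r)) (G' (0, 1)) y :=
  hG.comp_hasDerivAt y ((hasDerivAt_const y s).prodMk (hasDerivAt_id y))

end Slices

theorem hasDerivAt_deriv_slice_of_contDiffAt {f : ℝ → ℝ → ℝ} {t x : ℝ}
    (hf : ContDiffAt ℝ 2 (uncurry f) (t, x)) :
    HasDerivAt (fun s => deriv (f s) x) (deriv (fun y => deriv (fun s => f s y) t) x) t := by
  set D := fderiv ℝ (uncurry f)
  have hdiff : ∀ᶠ p in 𝓝 (t, x), HasFDerivAt (uncurry f) (D p) p :=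
    (hf.eventually (by simp)).mono fun p hp => (hp.differentiableAt (by simp)).hasFDerivAt
  have hD : HasFDerivAt D (fderiv ℝ D (t, x)) (t, x) :=
    ((hf.fderiv_right (m := 1) le_rfl).differentiableAt one_ne_zero).hasFDerivAt
  have hsymm : fderiv ℝ D (t, x) (1, 0) (0, 1) = fderiv ℝ D (t, x) (0, 1) (1, 0) :=
    hf.isSymmSndFDerivAt (by simp [minSmoothness_of_isRCLikeNormedField]) (1, 0) (0, 1)
  have hx : HasDerivAt (fun y => deriv (fun s => f s y) t) (fderiv ℝ D (t, x) (0, 1) (1, 0)) x := by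
    have h := hD.hasDerivAt_slice_snd.clm_apply (hasDerivAt_const x ((1 : ℝ), (0 : ℝ)))
    rw [map_zero, add_zero] at h
    refine h.congr_of_eventuallyEq ?_
    have hcurve : Tendsto (fun y : ℝ => (t, y)) (𝓝 x) (𝓝 (t, x)) :=
      (continuous_const.prodMk continuous_id).tendsto x
    filter_upwards [hcurve.eventually hdiff] with y hy
    exact hy.hasDerivAt_slice_fst.deriv
  have ht : HasDerivAt (fun s => deriv (f s) x) (fderiv ℝ D (t, x) (1, 0) (0, 1)) t := by
    have h := hD.hasDerivAt_slice_fst.clm_apply (hasDerivAt_const t ((0 : ℝ), (1 : ℝ)))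
    rw [map_zero, add_zero] at h
    refine h.congr_of_eventuallyEq ?_
    have hcurve : Tendsto (fun s : ℝ => (s, x)) (𝓝 t) (𝓝 (t, x)) :=
      (continuous_id.prodMk continuous_const).tendsto t
    filter_upwards [hcurve.eventually hdiff] with s hs
    exact hs.hasDerivAt_slice_snd.deriv
  rwa [hx.deriv, ← hsymm]

section BSgen

variable (lam eps : ℝ)

theorem BSgen_const_mul (c : ℝ) (g : ℝ → ℝ) (x : ℝ) :
    BSgen lam eps (fun y => c * g y) x = c * BSgen lam eps g x := by
  simp only [BSgen, deriv_const_mul_field']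
  ring

variable {φ : ℝ → ℝ} {x : ℝ}

theorem hasDerivAt_BSgen (h₁ : DifferentiableAt ℝ (deriv φ) x)
    (h₂ : DifferentiableAt ℝ (deriv (deriv φ)) x) :
    HasDerivAt (BSgen lam eps φ)
      (2 * x * deriv (deriv φ) x + x ^ 2 * deriv (deriv (deriv φ)) x
        + eps * deriv (deriv φ) x - lam * (deriv φ x + x * deriv (deriv φ) x)) x := by
  have h := (((hasDerivAt_pow 2 x).fun_mul h₂.hasDerivAt).add (h₁.hasDerivAt.const_mul eps)).sub
    (((hasDerivAt_id x).const_mul lam).fun_mul h₁.hasDerivAt)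
  refine h.congr_deriv ?_
  simp only [id, Nat.cast_ofNat]
  ring

theorem BSgen_deriv_sq (h₁ : Differentiable ℝ (deriv φ))
    (h₂ : DifferentiableAt ℝ (deriv (deriv φ)) x) :
    BSgen lam eps (fun y => deriv φ y ^ 2) x
      = 2 * x ^ 2 * (deriv (deriv φ) x ^ 2 + deriv φ x * deriv (deriv (deriv φ)) x)
        + 2 * (eps - lam * x) * deriv φ x * deriv (deriv φ) x := by
  have hsq : deriv (fun y => deriv φ y ^ 2) = fun y => 2 * deriv φ y * deriv (deriv φ) y := by
    funext y
    simpa using ((h₁ y).hasDerivAt.fun_pow 2).deriv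
  have h := ((h₁ x).hasDerivAt.const_mul 2).fun_mul h₂.hasDerivAt
  rw [BSgen, hsq, h.deriv]
  ring

theorem two_mul_deriv_mul_deriv_BSgen_sub_BSgen_deriv_sq (h₁ : Differentiable ℝ (deriv φ))
    (h₂ : DifferentiableAt ℝ (deriv (deriv φ)) x) :
    2 * deriv φ x * deriv (BSgen lam eps φ) x - BSgen lam eps (fun y => deriv φ y ^ 2) x
      = -2 * (x * deriv (deriv φ) x - deriv φ x) ^ 2 - 2 * (lam - 1) * deriv φ x ^ 2 := by
  rw [(hasDerivAt_BSgen lam eps (h₁ x) h₂).deriv, BSgen_deriv_sq lam eps h₁ h₂]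
  ring

end BSgen

theorem BS_gradient_bound_general (lam eps : ℝ)
    (f : ℝ → ℝ → ℝ)
    (hf : ContDiffOn ℝ (⊤ : ℕ∞) (fun p : ℝ × ℝ => f p.1 p.2)
      (Set.Ioi (0 : ℝ) ×ˢ (Set.univ : Set ℝ)))
    (heq : ∀ t : ℝ, 0 < t → ∀ x : ℝ, deriv (fun s => f s x) t = BSgen lam eps (f t) x) :
    ∀ t : ℝ, 0 < t → ∀ x : ℝ,
      (deriv (fun s => (deriv (f s) x) ^ 2) t
          - BSgen lam eps (fun y => (deriv (f t) y) ^ 2) x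
        = -2 * (x * deriv (deriv (f t)) x - deriv (f t) x) ^ 2
          - 2 * (lam - 1) * (deriv (f t) x) ^ 2) ∧
      (1 < lam →
        deriv (fun s => Real.exp (2 * (lam - 1) * s) * (deriv (f s) x) ^ 2) t
            - BSgen lam eps
                (fun y => Real.exp (2 * (lam - 1) * t) * (deriv (f t) y) ^ 2) x
          ≤ 0) := by
  intro t ht x
  have hf_at : ∀ y, ContDiffAt ℝ ∞ (uncurry f) (t, y) := fun y =>
    hf.contDiffAt (prod_mem_nhds (Ioi_mem_nhds ht) univ_mem)
  have hslice : ContDiff ℝ ∞ (f t) := contDiff_iff_contDiffAt.2 fun y =>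
    (hf_at y).comp y (contDiffAt_const.prodMk contDiffAt_id)
  obtain ⟨-, hf'⟩ := contDiff_infty_iff_deriv.1 hslice
  obtain ⟨h₁, hf''⟩ := contDiff_infty_iff_deriv.1 hf'
  have hu : HasDerivAt (fun s => deriv (f s) x) (deriv (BSgen lam eps (f t)) x) t := by
    rw [← funext (heq t ht)]
    exact hasDerivAt_deriv_slice_of_contDiffAt ((hf_at x).of_le (WithTop.coe_le_coe.2 le_top))
  have key := two_mul_deriv_mul_deriv_BSgen_sub_BSgen_deriv_sq lam eps h₁
    (hf''.differentiable (by simp) x)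
  refine ⟨?_, fun _ => ?_⟩
  · rw [(hu.fun_pow 2).deriv]
    linear_combination key
  · set E := Real.exp (2 * (lam - 1) * t)
    have hE : HasDerivAt (fun s => Real.exp (2 * (lam - 1) * s)) (E * (2 * (lam - 1))) t :=
      ((hasDerivAt_id t).const_mul _).exp.congr_deriv (by simp [E])
    rw [(hE.fun_mul (hu.fun_pow 2)).deriv, BSgen_const_mul]
    calc _ = -(2 * E * (x * deriv (deriv (f t)) x - deriv (f t) x) ^ 2) := by
          linear_combination E * key
      _ ≤ 0 := neg_nonpos.2 (by positivity)

/-- Gradient bound for the B-S model in pointwise form: along any smooth solution of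
`∂_t f = Lf` on `(0,∞) × ℝ`,
`∂_t((∂_x f)²) − L((∂_x f)²) = −2(x∂_x²f − ∂_x f)² − 2(λ−1)(∂_x f)²`, and for `λ > 1`
`∂_t(e^{2(λ−1)t}(∂_x f)²) − L(e^{2(λ−1)t}(∂_x f)²) ≤ 0`. -/
theorem BS_gradient_bound (lam eps : ℝ) (hlam : 0 ≤ lam)
    (f : ℝ → ℝ → ℝ)
    (hf : ContDiffOn ℝ (⊤ : ℕ∞) (fun p : ℝ × ℝ => f p.1 p.2)
      (Set.Ioi (0 : ℝ) ×ˢ (Set.univ : Set ℝ)))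
    (heq : ∀ t : ℝ, 0 < t → ∀ x : ℝ, deriv (fun s => f s x) t = BSgen lam eps (f t) x) :
    ∀ t : ℝ, 0 < t → ∀ x : ℝ,
      (deriv (fun s => (deriv (f s) x) ^ 2) t
          - BSgen lam eps (fun y => (deriv (f t) y) ^ 2) x
        = -2 * (x * deriv (deriv (f t)) x - deriv (f t) x) ^ 2
          - 2 * (lam - 1) * (deriv (f t) x) ^ 2) ∧
      (1 < lam →
        deriv (fun s => Real.exp (2 * (lam - 1) * s) * (deriv (f s) x) ^ 2) t
            - BSgen lam eps
                (fun y => Real.exp (2 * (lam - 1) * t) * (deriv (f t) y) ^ 2) x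
          ≤ 0) :=
  BS_gradient_bound_general lam eps f hf heq
end
end

section
/- Let λ ≥ 0, ε ∈ ℝ, let (ε_j)_{j∈ℤᵈ} be positive reals with Σ_j ε_j < ∞, let G : ℤᵈ×ℤᵈ → ℝ satisfy Σ_k ε_k|G_{kj}| ≤ ξε_j for all j ∈ ℤᵈ with some ξ ∈ (0,∞), and let q_i : ℝ^{ℤᵈ} → ℝ (i ∈ ℤᵈ) be functions with Q := sup_i ‖q_i‖_∞ < ∞. Then for every configuration ω = (ω_k)_{k∈ℤᵈ} ∈ ℝ^{ℤᵈ} with Σ_k ε_k⟨ω_k⟩ < ∞, the series Σ_k ε_k [ ω_k²(1+ω_k²)^{−3/2} + (ε + q_k(ω))·ω_k(1+ω_k²)^{−1/2} − λω_k²(1+ω_k²)^{−1/2} + Σ_j G_{kj} ω_j ω_k (1+ω_k²)^{−1/2} ] converges absolutely and is bounded above by (λ + 1 + |ε| + Q)·Σ_j ε_j − (λ − ξ)·Σ_k ε_k⟨ω_k⟩. -/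
/-!
Write `⟪x⟫ = (1 + x²)^{1/2}`. Since `⟪x⟫' = x/⟪x⟫` and `⟪x⟫'' = ⟪x⟫⁻³`, each diagonal term is
`x²⟪x⟫⁻³ + c·x/⟪x⟫ − λx²/⟪x⟫ ≤ 1 + |c| − λ(⟪x⟫ − 1)`, because `x²/⟪x⟫ = ⟪x⟫ − ⟪x⟫⁻¹`.
Each interaction term is bounded by `ε_k |G_kj| ⟪ω_j⟫`; summing first over `k` (Tonelli) and
using `Σ_k ε_k |G_kj| ≤ ξ ε_j` bounds the double series by `ξ Σ_j ε_j ⟪ω_j⟫`.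
-/

noncomputable section

open Real

local notation "⟪" x "⟫" => (1 + x ^ 2) ^ ((1 : ℝ) / 2)

section Bracket

variable (x : ℝ)

lemma one_le_one_add_sq : 1 ≤ 1 + x ^ 2 := le_add_of_nonneg_right (sq_nonneg x)

lemma one_le_bracket : 1 ≤ ⟪x⟫ :=
  one_le_rpow (one_le_one_add_sq x) (by norm_num)

lemma abs_le_bracket : |x| ≤ ⟪x⟫ := by
  rw [← sqrt_eq_rpow, ← sqrt_sq_eq_abs]
  exact sqrt_le_sqrt (by linarith)

lemma one_add_sq_rpow_neg_half_le_one : (1 + x ^ 2) ^ (-(1 : ℝ) / 2) ≤ 1 :=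
  rpow_le_one_of_one_le_of_nonpos (one_le_one_add_sq x) (by norm_num)

lemma one_add_sq_mul_rpow (a : ℝ) : (1 + x ^ 2) * (1 + x ^ 2) ^ a = (1 + x ^ 2) ^ (a + 1) := by
  rw [rpow_add (by positivity), rpow_one, mul_comm]

lemma sq_mul_rpow_neg_three_half_le_one : x ^ 2 * (1 + x ^ 2) ^ (-(3 : ℝ) / 2) ≤ 1 :=
  calc x ^ 2 * (1 + x ^ 2) ^ (-(3 : ℝ) / 2)
      ≤ (1 + x ^ 2) * (1 + x ^ 2) ^ (-(3 : ℝ) / 2) := by gcongr; linarith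
    _ = (1 + x ^ 2) ^ (-(1 : ℝ) / 2) := by rw [one_add_sq_mul_rpow]; norm_num
    _ ≤ 1 := one_add_sq_rpow_neg_half_le_one x

lemma abs_mul_rpow_neg_half_le_one : |x * (1 + x ^ 2) ^ (-(1 : ℝ) / 2)| ≤ 1 := by
  have hpos : 0 < (1 + x ^ 2) ^ (-(1 : ℝ) / 2) := by positivity
  rw [abs_mul, abs_of_pos hpos]
  calc |x| * (1 + x ^ 2) ^ (-(1 : ℝ) / 2) ≤ ⟪x⟫ * (1 + x ^ 2) ^ (-(1 : ℝ) / 2) := by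
        gcongr; exact abs_le_bracket x
    _ = 1 := by rw [← rpow_add (by positivity)]; norm_num

lemma sq_mul_rpow_neg_half : x ^ 2 * (1 + x ^ 2) ^ (-(1 : ℝ) / 2)
    = ⟪x⟫ - (1 + x ^ 2) ^ (-(1 : ℝ) / 2) := by
  have h := one_add_sq_mul_rpow x (-(1 : ℝ) / 2)
  norm_num at h ⊢
  linarith

end Bracket

/-- `(L⟪·⟫)(x)` with `ε` replaced by a drift coefficient `c`. -/
def generatorBracket (lam c x : ℝ) : ℝ :=
  x ^ 2 * (1 + x ^ 2) ^ (-(3 : ℝ) / 2) + c * (x * (1 + x ^ 2) ^ (-(1 : ℝ) / 2))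
    - lam * x ^ 2 * (1 + x ^ 2) ^ (-(1 : ℝ) / 2)

section GeneratorBracket

variable {lam : ℝ} (c x : ℝ)

lemma abs_mul_mul_rpow_neg_half_le : |c * (x * (1 + x ^ 2) ^ (-(1 : ℝ) / 2))| ≤ |c| := by
  rw [abs_mul]
  exact mul_le_of_le_one_right (abs_nonneg c) (abs_mul_rpow_neg_half_le_one x)

lemma generatorBracket_le (hlam : 0 ≤ lam) :
    generatorBracket lam c x ≤ lam + 1 + |c| - lam * ⟪x⟫ := by
  have h1 := sq_mul_rpow_neg_three_half_le_one x
  have h2 := (abs_le.mp (abs_mul_mul_rpow_neg_half_le c x)).2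
  have h3 : lam * (⟪x⟫ - 1) ≤ lam * (x ^ 2 * (1 + x ^ 2) ^ (-(1 : ℝ) / 2)) := by
    rw [sq_mul_rpow_neg_half]
    gcongr
    exact one_add_sq_rpow_neg_half_le_one x
  unfold generatorBracket
  linarith

lemma abs_generatorBracket_le (hlam : 0 ≤ lam) :
    |generatorBracket lam c x| ≤ (lam + 1 + |c|) * ⟪x⟫ := by
  have h1 := sq_mul_rpow_neg_three_half_le_one x
  have h1' : 0 ≤ x ^ 2 * (1 + x ^ 2) ^ (-(3 : ℝ) / 2) := by positivity
  have h2 := abs_le.mp (abs_mul_mul_rpow_neg_half_le c x)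
  have h3 : lam * x ^ 2 * (1 + x ^ 2) ^ (-(1 : ℝ) / 2) ≤ lam * ⟪x⟫ := by
    rw [mul_assoc, sq_mul_rpow_neg_half]
    gcongr
    linarith [rpow_pos_of_pos (by positivity : (0 : ℝ) < 1 + x ^ 2) (-(1 : ℝ) / 2)]
  have h3' : 0 ≤ lam * x ^ 2 * (1 + x ^ 2) ^ (-(1 : ℝ) / 2) := by positivity
  have h4 := one_le_bracket x
  have h5 : |c| ≤ |c| * ⟪x⟫ := le_mul_of_one_le_right (abs_nonneg c) h4
  unfold generatorBracket
  rw [abs_le]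
  constructor <;> linarith

end GeneratorBracket

section Series

variable {ι : Type*} {w : ι → ℝ}

lemma summable_and_tsum_generatorBracket_le {x c : ι → ℝ} {lam C : ℝ} (hlam : 0 ≤ lam)
    (hw : ∀ k, 0 ≤ w k) (hws : Summable w) (hc : ∀ k, |c k| ≤ C)
    (hx : Summable fun k => w k * ⟪x k⟫) :
    Summable (fun k => w k * generatorBracket lam (c k) (x k)) ∧
      ∑' k, w k * generatorBracket lam (c k) (x k)
        ≤ (lam + 1 + C) * ∑' k, w k - lam * ∑' k, w k * ⟪x k⟫ := by
  have hsum : Summable fun k => w k * generatorBracket lam (c k) (x k) := by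
    refine (hx.mul_left (lam + 1 + C)).of_norm_bounded fun k => ?_
    rw [norm_eq_abs, abs_mul, abs_of_nonneg (hw k), mul_left_comm]
    have hk : |generatorBracket lam (c k) (x k)| ≤ (lam + 1 + C) * ⟪x k⟫ :=
      (abs_generatorBracket_le _ _ hlam).trans (by gcongr; exact hc k)
    exact mul_le_mul_of_nonneg_left hk (hw k)
  refine ⟨hsum, ?_⟩
  calc ∑' k, w k * generatorBracket lam (c k) (x k)
      ≤ ∑' k, ((lam + 1 + C) * w k - lam * (w k * ⟪x k⟫)) := by
        refine hsum.tsum_le_tsum (fun k => ?_) ((hws.mul_left _).sub (hx.mul_left _))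
        have h := mul_le_mul_of_nonneg_left (generatorBracket_le (c k) (x k) hlam) (hw k)
        have hC := mul_le_mul_of_nonneg_left (hc k) (hw k)
        linarith
    _ = (lam + 1 + C) * ∑' k, w k - lam * ∑' k, w k * ⟪x k⟫ := by
        rw [(hws.mul_left _).tsum_sub (hx.mul_left _), tsum_mul_left, tsum_mul_left]

lemma summable_and_tsum_kernel_le {v : ι → ℝ} {G : ι → ι → ℝ} {ξ : ℝ}
    (hw : ∀ k, 0 ≤ w k) (hv : ∀ j, 0 ≤ v j) (hwv : Summable fun j => w j * v j)
    (hG : ∀ j, Summable (fun k => w k * |G k j|) ∧ ∑' k, w k * |G k j| ≤ ξ * w j) :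
    Summable (fun p : ι × ι => w p.1 * |G p.1 p.2| * v p.2) ∧
      ∑' p : ι × ι, w p.1 * |G p.1 p.2| * v p.2 ≤ ξ * ∑' j, w j * v j := by
  have hH_nonneg : ∀ p : ι × ι, 0 ≤ w p.2 * |G p.2 p.1| * v p.1 := fun p =>
    mul_nonneg (mul_nonneg (hw _) (abs_nonneg _)) (hv _)
  have hcol : ∀ j, Summable fun k => w k * |G k j| * v j := fun j => (hG j).1.mul_right _
  have hcol_le : ∀ j, ∑' k, w k * |G k j| * v j ≤ ξ * (w j * v j) := fun j => by
    rw [tsum_mul_right, ← mul_assoc]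
    exact mul_le_mul_of_nonneg_right (hG j).2 (hv j)
  have hH : Summable fun p : ι × ι => w p.2 * |G p.2 p.1| * v p.1 :=
    (summable_prod_of_nonneg hH_nonneg).mpr ⟨hcol, .of_nonneg_of_le
      (fun j => tsum_nonneg fun k => hH_nonneg (j, k)) hcol_le (hwv.mul_left ξ)⟩
  refine ⟨(Equiv.prodComm ι ι).summable_iff.mpr hH, ?_⟩
  calc ∑' p : ι × ι, w p.1 * |G p.1 p.2| * v p.2
      = ∑' p : ι × ι, w p.2 * |G p.2 p.1| * v p.1 :=
        (Equiv.prodComm ι ι).tsum_eq fun p => w p.2 * |G p.2 p.1| * v p.1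
    _ = ∑' j, ∑' k, w k * |G k j| * v j := hH.tsum_prod' hcol
    _ ≤ ∑' j, ξ * (w j * v j) :=
        ((summable_prod_of_nonneg hH_nonneg).mp hH).2.tsum_le_tsum hcol_le (hwv.mul_left ξ)
    _ = ξ * ∑' j, w j * v j := tsum_mul_left

lemma summable_and_tsum_interaction_le {x : ι → ℝ} {G : ι → ι → ℝ} {ξ : ℝ}
    (hw : ∀ k, 0 ≤ w k)
    (hG : ∀ j, Summable (fun k => w k * |G k j|) ∧ ∑' k, w k * |G k j| ≤ ξ * w j)
    (hx : Summable fun k => w k * ⟪x k⟫) :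
    Summable (fun p : ι × ι =>
        w p.1 * (G p.1 p.2 * x p.2 * x p.1 * (1 + x p.1 ^ 2) ^ (-(1 : ℝ) / 2))) ∧
      ∑' p : ι × ι, w p.1 * (G p.1 p.2 * x p.2 * x p.1 * (1 + x p.1 ^ 2) ^ (-(1 : ℝ) / 2))
        ≤ ξ * ∑' k, w k * ⟪x k⟫ := by
  have hbracket : ∀ j, 0 ≤ ⟪x j⟫ := fun j => zero_le_one.trans (one_le_bracket (x j))
  obtain ⟨hK, hK_le⟩ := summable_and_tsum_kernel_le hw hbracket hx hG
  have hbound : ∀ p : ι × ι,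
      ‖w p.1 * (G p.1 p.2 * x p.2 * x p.1 * (1 + x p.1 ^ 2) ^ (-(1 : ℝ) / 2))‖
        ≤ w p.1 * |G p.1 p.2| * ⟪x p.2⟫ := by
    rintro ⟨k, j⟩
    calc ‖w k * (G k j * x j * x k * (1 + x k ^ 2) ^ (-(1 : ℝ) / 2))‖
        = w k * |G k j| * |x j| * |x k * (1 + x k ^ 2) ^ (-(1 : ℝ) / 2)| := by
          rw [norm_eq_abs, mul_assoc (G k j * x j), abs_mul, abs_mul, abs_mul,
            abs_of_nonneg (hw k)]
          ring
      _ ≤ w k * |G k j| * ⟪x j⟫ * 1 := by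
          have hwG : 0 ≤ w k * |G k j| := mul_nonneg (hw k) (abs_nonneg _)
          exact mul_le_mul (mul_le_mul_of_nonneg_left (abs_le_bracket (x j)) hwG)
            (abs_mul_rpow_neg_half_le_one (x k)) (abs_nonneg _) (by positivity)
      _ = w k * |G k j| * ⟪x j⟫ := mul_one _
  have hS := hK.of_norm_bounded hbound
  exact ⟨hS, (hS.tsum_le_tsum (fun p => (le_abs_self _).trans (hbound p)) hK).trans hK_le⟩

end Series

theorem BS_infinite_lyapunov_general (d : ℕ) (lam eps : ℝ) (hlam : 0 ≤ lam)
    (w : (Fin d → ℤ) → ℝ) (hw : ∀ j, 0 < w j) (hws : Summable w)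
    (ξ : ℝ)
    (G : (Fin d → ℤ) → (Fin d → ℤ) → ℝ)
    (hG : ∀ j, Summable (fun k => w k * |G k j|) ∧ (∑' k, w k * |G k j|) ≤ ξ * w j)
    (q : (Fin d → ℤ) → ((Fin d → ℤ) → ℝ) → ℝ) (Q : ℝ)
    (hQ : ∀ i ω, |q i ω| ≤ Q)
    (ω : (Fin d → ℤ) → ℝ)
    (hω : Summable (fun k => w k * (1 + ω k ^ 2) ^ ((1 : ℝ) / 2))) :
    Summable (fun k =>
      w k * ((ω k) ^ 2 * (1 + ω k ^ 2) ^ (-(3 : ℝ) / 2)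
        + (eps + q k ω) * (ω k * (1 + ω k ^ 2) ^ (-(1 : ℝ) / 2))
        - lam * (ω k) ^ 2 * (1 + ω k ^ 2) ^ (-(1 : ℝ) / 2))) ∧
    Summable (fun p : (Fin d → ℤ) × (Fin d → ℤ) =>
      w p.1 * (G p.1 p.2 * ω p.2 * ω p.1 * (1 + ω p.1 ^ 2) ^ (-(1 : ℝ) / 2))) ∧
    (∑' k, w k * ((ω k) ^ 2 * (1 + ω k ^ 2) ^ (-(3 : ℝ) / 2)
        + (eps + q k ω) * (ω k * (1 + ω k ^ 2) ^ (-(1 : ℝ) / 2))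
        - lam * (ω k) ^ 2 * (1 + ω k ^ 2) ^ (-(1 : ℝ) / 2)))
      + (∑' p : (Fin d → ℤ) × (Fin d → ℤ),
          w p.1 * (G p.1 p.2 * ω p.2 * ω p.1 * (1 + ω p.1 ^ 2) ^ (-(1 : ℝ) / 2)))
      ≤ (lam + 1 + |eps| + Q) * (∑' j, w j)
        - (lam - ξ) * ∑' k, w k * (1 + ω k ^ 2) ^ ((1 : ℝ) / 2) := by
  have hw' : ∀ k, 0 ≤ w k := fun k => (hw k).le
  have hc : ∀ k, |eps + q k ω| ≤ |eps| + Q := fun k =>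
    (abs_add_le _ _).trans (add_le_add_right (hQ k ω) _)
  obtain ⟨hdiag, hdiag_le⟩ := summable_and_tsum_generatorBracket_le hlam hw' hws hc hω
  obtain ⟨hint, hint_le⟩ := summable_and_tsum_interaction_le hw' hG hω
  exact ⟨hdiag, hint, (add_le_add hdiag_le hint_le).trans_eq (by ring)⟩

/-- Compactness estimate for the interacting infinite-dimensional B-S model: the formal
action of `𝓛 = Σ_j L_j + Σ_{j,i} G_{ij}x_j∂_i + Σ_i q_i∂_i` on the weighted Lyapunov
function `Σ_k ε_k⟨x_k⟩` converges absolutely and is bounded by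
`(λ+1+|ε|+Q)Σ_j ε_j − (λ−ξ)Σ_k ε_k⟨ω_k⟩`. -/
theorem BS_infinite_lyapunov (d : ℕ) (lam eps : ℝ) (hlam : 0 ≤ lam)
    (w : (Fin d → ℤ) → ℝ) (hw : ∀ j, 0 < w j) (hws : Summable w)
    (ξ : ℝ) (hξ : 0 < ξ)
    (G : (Fin d → ℤ) → (Fin d → ℤ) → ℝ)
    (hG : ∀ j, Summable (fun k => w k * |G k j|) ∧ (∑' k, w k * |G k j|) ≤ ξ * w j)
    (q : (Fin d → ℤ) → ((Fin d → ℤ) → ℝ) → ℝ) (Q : ℝ)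
    (hQ : ∀ i ω, |q i ω| ≤ Q)
    (ω : (Fin d → ℤ) → ℝ)
    (hω : Summable (fun k => w k * (1 + ω k ^ 2) ^ ((1 : ℝ) / 2))) :
    Summable (fun k =>
      w k * ((ω k) ^ 2 * (1 + ω k ^ 2) ^ (-(3 : ℝ) / 2)
        + (eps + q k ω) * (ω k * (1 + ω k ^ 2) ^ (-(1 : ℝ) / 2))
        - lam * (ω k) ^ 2 * (1 + ω k ^ 2) ^ (-(1 : ℝ) / 2))) ∧
    Summable (fun p : (Fin d → ℤ) × (Fin d → ℤ) =>
      w p.1 * (G p.1 p.2 * ω p.2 * ω p.1 * (1 + ω p.1 ^ 2) ^ (-(1 : ℝ) / 2))) ∧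
    (∑' k, w k * ((ω k) ^ 2 * (1 + ω k ^ 2) ^ (-(3 : ℝ) / 2)
        + (eps + q k ω) * (ω k * (1 + ω k ^ 2) ^ (-(1 : ℝ) / 2))
        - lam * (ω k) ^ 2 * (1 + ω k ^ 2) ^ (-(1 : ℝ) / 2)))
      + (∑' p : (Fin d → ℤ) × (Fin d → ℤ),
          w p.1 * (G p.1 p.2 * ω p.2 * ω p.1 * (1 + ω p.1 ^ 2) ^ (-(1 : ℝ) / 2)))
      ≤ (lam + 1 + |eps| + Q) * (∑' j, w j)
        - (lam - ξ) * ∑' k, w k * (1 + ω k ^ 2) ^ ((1 : ℝ) / 2) :=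
  BS_infinite_lyapunov_general d lam eps hlam w hw hws ξ G hG q Q hQ ω hω
end
end
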